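/- Let e₁*, e₂*, e₃* be real numbers with 1 ≥ |e₁*| ≥ |e₂*| ≥ |e₃*|, let A, B ∈ SO(3), and let R = B·diag(e₁*,e₂*,e₃*)·A. Then: (a) for every O_A, O_B ∈ SO(3), writing R' = O_B·R·O_A and letting S' be the upper-left 2×2 submatrix of R', for every d₁, d₂ ∈ ℝ and U', V' ∈ SO(2) with S' = V'·diag(d₁,d₂)·U', one has 1 − h₂((1+d₁)/2) − h₂((1+d₂)/2) + h₂((1+√(R'₁₁² + R'₂₁²))/2) − h₂((1+R'₁₁)/2) ≤ 1 − h₂((1+|e₁*|)/2) − h₂((1+|e₂*|)/2); and (b) there exist O_A, O_B ∈ SO(3), d₁, d₂ ∈ ℝ and U', V' ∈ SO(2) as above for which equality holds. -/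

import Mathlib

/-- Binary entropy function (base-2 logarithm), with the convention `0 * log 0 = 0`. -/
noncomputable def h2 (p : ℝ) : ℝ := -(p * Real.logb 2 p) - (1 - p) * Real.logb 2 (1 - p)

/-- `M` is a real 3×3 special orthogonal matrix. -/
def SO3 (M : Matrix (Fin 3) (Fin 3) ℝ) : Prop := M.transpose * M = 1 ∧ M.det = 1

/-- `M` is a real 2×2 special orthogonal matrix. -/
def SO2 (M : Matrix (Fin 2) (Fin 2) ℝ) : Prop := M.transpose * M = 1 ∧ M.det = 1

/-- Upper-left 2×2 submatrix of a 3×3 real matrix. -/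
def sub2 (M : Matrix (Fin 3) (Fin 3) ℝ) : Matrix (Fin 2) (Fin 2) ℝ :=
  !![M 0 0, M 0 1; M 1 0, M 1 1]

/-!
After compensation, `R' = Q · diag(e₁, e₂, e₃) · P` with `Q`, `P` orthogonal, so on vectors
`x = (w, 0)` one has `|S' w|² ≤ |R' x|² = Σ eᵢ² (P x)ᵢ²`. This is at most `e₁² |w|²` for every `w`,
and at most `e₂² |w|²` on the line `(P x)₀ = 0`. Reading `|S' w|²` through the decomposition
`S' = V' · diag(d₁, d₂) · U'` (a min–max argument) gives the interlacing inequalities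
`|d₁|, |d₂| ≤ |e₁|` and `min |dᵢ| ≤ |e₂|`. Since `h₂((1 + x)/2)` decreases in `|x|` on `[-1, 1]`,
this bounds `1 - h₂((1 + d₁)/2) - h₂((1 + d₂)/2)` by the right-hand side, and the correction
`h₂((1 + √(R'₁₁² + R'₂₁²))/2) - h₂((1 + R'₁₁)/2)` is `≤ 0` because that column has norm `≤ 1`.
Equality holds for `O_A = Aᵀ`, `O_B = Bᵀ`, where `R'` is diagonal.
-/

open Matrix

lemma h2_eq_binEntropy_div_log_two (p : ℝ) : h2 p = Real.binEntropy p / Real.log 2 := by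
  rw [h2, Real.binEntropy, Real.log_inv, Real.log_inv, Real.logb, Real.logb]
  ring

lemma h2_half_add_abs (x : ℝ) : h2 ((1 + |x|) / 2) = h2 ((1 + x) / 2) := by
  rcases abs_cases x with ⟨h, _⟩ | ⟨h, _⟩
  · rw [h]
  · rw [h, show (1 + -x) / 2 = 1 - (1 + x) / 2 by ring, h2_eq_binEntropy_div_log_two,
      h2_eq_binEntropy_div_log_two, Real.binEntropy_one_sub]

lemma h2_half_add_le_of_sq_le {x y : ℝ} (hxy : x ^ 2 ≤ y ^ 2) (hy : y ^ 2 ≤ 1) :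
    h2 ((1 + y) / 2) ≤ h2 ((1 + x) / 2) := by
  have hxy' : |x| ≤ |y| := sq_le_sq.mp hxy
  have hy' : |y| ≤ 1 := sq_le_one_iff_abs_le_one y |>.mp hy
  rw [← h2_half_add_abs x, ← h2_half_add_abs y, h2_eq_binEntropy_div_log_two,
    h2_eq_binEntropy_div_log_two]
  refine div_le_div_of_nonneg_right ?_ (Real.log_pos one_lt_two).le
  have hx0 := abs_nonneg x
  exact Real.binEntropy_strictAntiOn.antitoneOn ⟨by linarith, by linarith⟩
    ⟨by linarith, by linarith⟩ (by linarith)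

lemma h2_half_add_sqrt_le {a b : ℝ} (h : a ^ 2 + b ^ 2 ≤ 1) :
    h2 ((1 + √(a ^ 2 + b ^ 2)) / 2) ≤ h2 ((1 + a) / 2) := by
  have hsq : √(a ^ 2 + b ^ 2) ^ 2 = a ^ 2 + b ^ 2 := Real.sq_sqrt (by positivity)
  exact h2_half_add_le_of_sq_le (by nlinarith) (by rwa [hsq])

lemma h2_add_h2_le_of_sq_le {e1 e2 d1 d2 : ℝ} (he : e2 ^ 2 ≤ e1 ^ 2) (he1 : e1 ^ 2 ≤ 1)
    (hd1 : d1 ^ 2 ≤ e1 ^ 2) (hd2 : d2 ^ 2 ≤ e1 ^ 2) (hmin : d1 ^ 2 ≤ e2 ^ 2 ∨ d2 ^ 2 ≤ e2 ^ 2) :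
    h2 ((1 + e1) / 2) + h2 ((1 + e2) / 2) ≤ h2 ((1 + d1) / 2) + h2 ((1 + d2) / 2) := by
  rcases hmin with h | h
  · linarith [h2_half_add_le_of_sq_le hd2 he1, h2_half_add_le_of_sq_le h (he.trans he1)]
  · linarith [h2_half_add_le_of_sq_le hd1 he1, h2_half_add_le_of_sq_le h (he.trans he1)]

section OrthogonalDiagonal

variable {n : Type*} [Fintype n] [DecidableEq n]

lemma transpose_mul_self_mul {M N : Matrix n n ℝ} (hM : Mᵀ * M = 1) (hN : Nᵀ * N = 1) :
    (M * N)ᵀ * (M * N) = 1 := by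
  rw [transpose_mul, Matrix.mul_assoc, ← Matrix.mul_assoc Mᵀ, hM, Matrix.one_mul, hN]

lemma dotProduct_self_mulVec_of_transpose_mul_self {M : Matrix n n ℝ} (hM : Mᵀ * M = 1)
    (x : n → ℝ) : (M *ᵥ x) ⬝ᵥ (M *ᵥ x) = x ⬝ᵥ x := by
  rw [dotProduct_mulVec, ← mulVec_transpose, mulVec_mulVec, hM, one_mulVec]

lemma dotProduct_self_diagonal_mulVec (d x : n → ℝ) :
    (diagonal d *ᵥ x) ⬝ᵥ (diagonal d *ᵥ x) = ∑ i, d i ^ 2 * (x i * x i) := by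
  simp only [mulVec_diagonal, dotProduct]
  exact Finset.sum_congr rfl fun i _ => by ring

lemma dotProduct_self_diagonal_mulVec_le {d x : n → ℝ} {c : ℝ}
    (h : ∀ i, x i ≠ 0 → d i ^ 2 ≤ c) :
    (diagonal d *ᵥ x) ⬝ᵥ (diagonal d *ᵥ x) ≤ c * (x ⬝ᵥ x) := by
  rw [dotProduct_self_diagonal_mulVec, dotProduct, Finset.mul_sum]
  refine Finset.sum_le_sum fun i _ => ?_
  by_cases hx : x i = 0
  · simp [hx]
  · exact mul_le_mul_of_nonneg_right (h i hx) (mul_self_nonneg _)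

lemma le_dotProduct_self_diagonal_mulVec {d x : n → ℝ} {c : ℝ} (h : ∀ i, c ≤ d i ^ 2) :
    c * (x ⬝ᵥ x) ≤ (diagonal d *ᵥ x) ⬝ᵥ (diagonal d *ᵥ x) := by
  rw [dotProduct_self_diagonal_mulVec, dotProduct, Finset.mul_sum]
  exact Finset.sum_le_sum fun i _ => mul_le_mul_of_nonneg_right (h i) (mul_self_nonneg _)

lemma dotProduct_self_mulVec_of_eq_mul_diagonal_mul {S V U : Matrix n n ℝ} {d : n → ℝ}
    (hS : S = V * diagonal d * U) (hV : Vᵀ * V = 1) (w : n → ℝ) :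
    (S *ᵥ w) ⬝ᵥ (S *ᵥ w) = (diagonal d *ᵥ (U *ᵥ w)) ⬝ᵥ (diagonal d *ᵥ (U *ᵥ w)) := by
  rw [hS, ← mulVec_mulVec, ← mulVec_mulVec, dotProduct_self_mulVec_of_transpose_mul_self hV]

lemma sq_le_of_eq_mul_diagonal_mul {S V U : Matrix n n ℝ} {d : n → ℝ}
    (hS : S = V * diagonal d * U) (hV : Vᵀ * V = 1) (hU : Uᵀ * U = 1) {c : ℝ}
    (hc : ∀ w, (S *ᵥ w) ⬝ᵥ (S *ᵥ w) ≤ c * (w ⬝ᵥ w)) (i : n) : d i ^ 2 ≤ c := by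
  have hUUt : U * Uᵀ = 1 := mul_eq_one_comm.mp hU
  have hUt : Uᵀᵀ * Uᵀ = 1 := by rwa [transpose_transpose]
  have hw : U *ᵥ (Uᵀ *ᵥ Pi.single i 1) = Pi.single i 1 := by
    rw [mulVec_mulVec, hUUt, one_mulVec]
  have := hc (Uᵀ *ᵥ Pi.single i 1)
  rw [dotProduct_self_mulVec_of_eq_mul_diagonal_mul hS hV, hw,
    dotProduct_self_mulVec_of_transpose_mul_self hUt, dotProduct_self_diagonal_mulVec] at this
  simpa [Pi.single_apply] using this

end OrthogonalDiagonal

lemma sq_le_or_sq_le_of_eq_mul_diagonal_mul {S V U : Matrix (Fin 2) (Fin 2) ℝ} {d : Fin 2 → ℝ}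
    (hS : S = V * diagonal d * U) (hV : Vᵀ * V = 1) (hU : Uᵀ * U = 1) {c : ℝ} (a : Fin 2 → ℝ)
    (hc : ∀ w, w ⬝ᵥ a = 0 → (S *ᵥ w) ⬝ᵥ (S *ᵥ w) ≤ c * (w ⬝ᵥ w)) :
    d 0 ^ 2 ≤ c ∨ d 1 ^ 2 ≤ c := by
  refine min_le_iff.mp ?_
  obtain ⟨w, hw, haw⟩ := exists_ne_zero_dotProduct_eq_zero a
  have hpos : 0 < w ⬝ᵥ w :=
    lt_of_le_of_ne (Finset.sum_nonneg fun i _ => mul_self_nonneg (w i))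
      (Ne.symm (dotProduct_self_eq_zero.not.mpr hw))
  have hlow := le_dotProduct_self_diagonal_mulVec (x := U *ᵥ w) (d := d)
    (c := min (d 0 ^ 2) (d 1 ^ 2)) fun i => by
      fin_cases i
      exacts [min_le_left _ _, min_le_right _ _]
  rw [dotProduct_self_mulVec_of_transpose_mul_self hU,
    ← dotProduct_self_mulVec_of_eq_mul_diagonal_mul hS hV] at hlow
  exact le_of_mul_le_mul_right (hlow.trans (hc w haw)) hpos

lemma dotProduct_self_sub2_mulVec_le (M : Matrix (Fin 3) (Fin 3) ℝ) (w : Fin 2 → ℝ) :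
    (sub2 M *ᵥ w) ⬝ᵥ (sub2 M *ᵥ w) ≤ (M *ᵥ ![w 0, w 1, 0]) ⬝ᵥ (M *ᵥ ![w 0, w 1, 0]) := by
  simp only [sub2, dotProduct, mulVec, Fin.sum_univ_two, Fin.sum_univ_three, Fin.isValue, of_apply,
    cons_val', cons_val_zero, cons_val_fin_one, cons_val_one, cons_val, mul_zero, add_zero,
    le_add_iff_nonneg_right]
  exact mul_self_nonneg _

lemma dotProduct_self_sub2_mul_diagonal_mul_le {Q P : Matrix (Fin 3) (Fin 3) ℝ} {e : Fin 3 → ℝ}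
    (hQ : Qᵀ * Q = 1) (hP : Pᵀ * P = 1) (w : Fin 2 → ℝ) {c : ℝ}
    (hc : ∀ i, (P *ᵥ ![w 0, w 1, 0]) i ≠ 0 → e i ^ 2 ≤ c) :
    (sub2 (Q * diagonal e * P) *ᵥ w) ⬝ᵥ (sub2 (Q * diagonal e * P) *ᵥ w) ≤ c * (w ⬝ᵥ w) := by
  calc _ ≤ _ := dotProduct_self_sub2_mulVec_le _ w
    _ = _ := dotProduct_self_mulVec_of_eq_mul_diagonal_mul rfl hQ _
    _ ≤ _ := dotProduct_self_diagonal_mulVec_le hc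
    _ = c * (w ⬝ᵥ w) := by
      rw [dotProduct_self_mulVec_of_transpose_mul_self hP]
      simp [dotProduct, Fin.sum_univ_two, Fin.sum_univ_three]

lemma sub2_apply_zero_sq_add_sq_le {Q P : Matrix (Fin 3) (Fin 3) ℝ} {e : Fin 3 → ℝ} {c : ℝ}
    (hQ : Qᵀ * Q = 1) (hP : Pᵀ * P = 1) (he : ∀ i, e i ^ 2 ≤ c) :
    (Q * diagonal e * P) 0 0 ^ 2 + (Q * diagonal e * P) 1 0 ^ 2 ≤ c := by
  have := dotProduct_self_sub2_mul_diagonal_mul_le hQ hP ![1, 0] fun i _ => he i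
  simpa [sub2, dotProduct, Fin.sum_univ_two, sq] using this

lemma sub2_singularValues_interlace {Q P : Matrix (Fin 3) (Fin 3) ℝ} {e1 e2 e3 d1 d2 : ℝ}
    {U V : Matrix (Fin 2) (Fin 2) ℝ} (hQ : Qᵀ * Q = 1) (hP : Pᵀ * P = 1)
    (he32 : e3 ^ 2 ≤ e2 ^ 2) (he21 : e2 ^ 2 ≤ e1 ^ 2)
    (hS : sub2 (Q * diagonal ![e1, e2, e3] * P) = V * diagonal ![d1, d2] * U)
    (hV : Vᵀ * V = 1) (hU : Uᵀ * U = 1) :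
    d1 ^ 2 ≤ e1 ^ 2 ∧ d2 ^ 2 ≤ e1 ^ 2 ∧ (d1 ^ 2 ≤ e2 ^ 2 ∨ d2 ^ 2 ≤ e2 ^ 2) := by
  have hd := sq_le_of_eq_mul_diagonal_mul hS hV hU (c := e1 ^ 2) fun w =>
    dotProduct_self_sub2_mul_diagonal_mul_le hQ hP w fun i _ => by
      fin_cases i
      exacts [le_rfl, he21, he32.trans he21]
  have hmin := sq_le_or_sq_le_of_eq_mul_diagonal_mul hS hV hU (c := e2 ^ 2) ![P 0 0, P 0 1]
    fun w hw => dotProduct_self_sub2_mul_diagonal_mul_le hQ hP w fun i hi => by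
      fin_cases i
      · refine absurd ?_ hi
        simpa [mulVec, dotProduct, Fin.sum_univ_two, Fin.sum_univ_three, mul_comm] using hw
      exacts [le_rfl, he32]
  exact ⟨by simpa using hd 0, by simpa using hd 1, by simpa using hmin⟩

lemma SO3.transpose {M : Matrix (Fin 3) (Fin 3) ℝ} (hM : SO3 M) : SO3 Mᵀ :=
  ⟨by rw [transpose_transpose]; exact mul_eq_one_comm.mp hM.1, by rw [det_transpose]; exact hM.2⟩

lemma SO2_one : SO2 1 := ⟨by simp, by simp⟩

lemma sub2_diagonal (a b c : ℝ) : sub2 (diagonal ![a, b, c]) = diagonal ![a, b] := by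
  ext i j
  fin_cases i <;> fin_cases j <;> simp [sub2]

theorem stmt13 (e1 e2 e3 : ℝ) (h32 : |e3| ≤ |e2|) (h21 : |e2| ≤ |e1|) (h11 : |e1| ≤ 1)
    (A B : Matrix (Fin 3) (Fin 3) ℝ) (hA : SO3 A) (hB : SO3 B)
    (R : Matrix (Fin 3) (Fin 3) ℝ)
    (hR : R = B * Matrix.diagonal ![e1, e2, e3] * A) :
    (∀ OA OB, SO3 OA → SO3 OB →
      ∀ (d1 d2 : ℝ) (U' V' : Matrix (Fin 2) (Fin 2) ℝ), SO2 U' → SO2 V' →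
        sub2 (OB * R * OA) = V' * Matrix.diagonal ![d1, d2] * U' →
        1 - h2 ((1 + d1) / 2) - h2 ((1 + d2) / 2)
            + h2 ((1 + Real.sqrt (((OB * R * OA) 0 0) ^ 2 + ((OB * R * OA) 1 0) ^ 2)) / 2)
            - h2 ((1 + (OB * R * OA) 0 0) / 2)
          ≤ 1 - h2 ((1 + |e1|) / 2) - h2 ((1 + |e2|) / 2)) ∧
    (∃ OA OB, SO3 OA ∧ SO3 OB ∧
      ∃ (d1 d2 : ℝ) (U' V' : Matrix (Fin 2) (Fin 2) ℝ), SO2 U' ∧ SO2 V' ∧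
        sub2 (OB * R * OA) = V' * Matrix.diagonal ![d1, d2] * U' ∧
        1 - h2 ((1 + d1) / 2) - h2 ((1 + d2) / 2)
            + h2 ((1 + Real.sqrt (((OB * R * OA) 0 0) ^ 2 + ((OB * R * OA) 1 0) ^ 2)) / 2)
            - h2 ((1 + (OB * R * OA) 0 0) / 2)
          = 1 - h2 ((1 + |e1|) / 2) - h2 ((1 + |e2|) / 2)) := by
  have he32 : e3 ^ 2 ≤ e2 ^ 2 := sq_le_sq.mpr h32
  have he21 : e2 ^ 2 ≤ e1 ^ 2 := sq_le_sq.mpr h21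
  have he1 : e1 ^ 2 ≤ 1 := (sq_le_one_iff_abs_le_one e1).mpr h11
  rw [h2_half_add_abs, h2_half_add_abs]
  refine ⟨fun OA OB hOA hOB d1 d2 U' V' hU hV hS => ?_, ?_⟩
  · have hM : OB * R * OA = (OB * B) * diagonal ![e1, e2, e3] * (A * OA) := by
      rw [hR]; simp only [Matrix.mul_assoc]
    have hQ := transpose_mul_self_mul hOB.1 hB.1
    have hP := transpose_mul_self_mul hA.1 hOA.1
    obtain ⟨hd1, hd2, hmin⟩ := sub2_singularValues_interlace hQ hP he32 he21 (hM ▸ hS) hV.1 hU.1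
    have hcol := sub2_apply_zero_sq_add_sq_le hQ hP (e := ![e1, e2, e3]) (c := 1) fun i => by
      fin_cases i
      exacts [he1, he21.trans he1, (he32.trans he21).trans he1]
    rw [hM]
    linarith [h2_add_h2_le_of_sq_le he21 he1 hd1 hd2 hmin, h2_half_add_sqrt_le hcol]
  · have hdiag : Bᵀ * R * Aᵀ = diagonal ![e1, e2, e3] := by
      rw [hR, Matrix.mul_assoc, Matrix.mul_assoc, mul_eq_one_comm.mp hA.1, Matrix.mul_one,
        ← Matrix.mul_assoc, hB.1, Matrix.one_mul]
    refine ⟨Aᵀ, Bᵀ, hA.transpose, hB.transpose, e1, e2, 1, 1, SO2_one, SO2_one, ?_, ?_⟩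
    · rw [hdiag, sub2_diagonal, Matrix.one_mul, Matrix.mul_one]
    · simp [hdiag, Real.sqrt_sq_eq_abs, h2_half_add_abs]
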